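/- Let g11, g12, g21, g22 > 0, P1, P2 > 0 and μ ≥ 0. Define, for (P11, P12) ∈ [0, P1] × [0, P2], the full-power weighted sum rate F(P11, P12) = log2((1 + g11·P1 + g12·P2)/(1 + g11·(P1 − P11) + g12·(P2 − P12))) + μ·log2((1 + g21·P1 + g22·P2)/(1 + g21·P11 + g22·P12)). Then for each fixed P12 ∈ [0, P2], the function P11 ↦ F(P11, P12) is convex on [0, P1] (its partial derivative in P11 is nondecreasing), and likewise for each fixed P11 the function P12 ↦ F(P11, P12) is convex on [0, P2]. Consequently the maximum of F over the box [0, P1] × [0, P2] is attained at one of its four vertices. -/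

import Mathlib

/-! Each partial rate is `logb` of a constant over a positive affine function of the variable,
i.e. a constant minus a concave function of it; so every slice of the weighted sum rate is
convex, and a function that is convex in each variable separately attains its maximum over a
rectangle at a vertex. -/

/-- Full-power weighted sum rate as a function of the powers `P11`, `P12`
that BTS 1 and BTS 2 allocate to mobile 1 (the rest of each budget going
to mobile 2). -/
noncomputable def fullPowerWSR (g11 g12 g21 g22 P1 P2 μ : ℝ) (P11 P12 : ℝ) : ℝ :=
  Real.logb 2 ((1 + g11 * P1 + g12 * P2) / (1 + g11 * (P1 - P11) + g12 * (P2 - P12))) +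
    μ * Real.logb 2 ((1 + g21 * P1 + g22 * P2) / (1 + g21 * P11 + g22 * P12))

open Set

section VertexMaximum

variable {𝕜 β : Type*} [Field 𝕜] [LinearOrder 𝕜] [IsStrictOrderedRing 𝕜]
  [AddCommGroup β] [LinearOrder β] [IsOrderedAddMonoid β] [Module 𝕜 β]
  [IsStrictOrderedModule 𝕜 β]

theorem exists_vertex_forall_le_of_convexOn_Icc {f : 𝕜 → 𝕜 → β} {a₁ b₁ a₂ b₂ : 𝕜}
    (h₁ : ∀ y ∈ Icc a₂ b₂, ConvexOn 𝕜 (Icc a₁ b₁) fun x => f x y)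
    (h₂ : ∀ x ∈ Icc a₁ b₁, ConvexOn 𝕜 (Icc a₂ b₂) (f x)) :
    ∃ v ∈ ({(a₁, a₂), (b₁, a₂), (a₁, b₂), (b₁, b₂)} : Finset (𝕜 × 𝕜)),
      ∀ x ∈ Icc a₁ b₁, ∀ y ∈ Icc a₂ b₂, f x y ≤ f v.1 v.2 := by
  obtain ⟨v, hv, hvmax⟩ := Finset.exists_max_image
    ({(a₁, a₂), (b₁, a₂), (a₁, b₂), (b₁, b₂)} : Finset (𝕜 × 𝕜)) (fun v => f v.1 v.2) (by simp)
  refine ⟨v, hv, fun x hx y hy => ?_⟩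
  have ha₁ : a₁ ∈ Icc a₁ b₁ := left_mem_Icc.2 (hx.1.trans hx.2)
  have hb₁ : b₁ ∈ Icc a₁ b₁ := right_mem_Icc.2 (hx.1.trans hx.2)
  have ha₂ : a₂ ∈ Icc a₂ b₂ := left_mem_Icc.2 (hy.1.trans hy.2)
  have hb₂ : b₂ ∈ Icc a₂ b₂ := right_mem_Icc.2 (hy.1.trans hy.2)
  calc f x y ≤ max (f a₁ y) (f b₁ y) := (h₁ y hy).le_max_of_mem_Icc ha₁ hb₁ hx
    _ ≤ max (max (f a₁ a₂) (f a₁ b₂)) (max (f b₁ a₂) (f b₁ b₂)) :=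
      max_le_max ((h₂ a₁ ha₁).le_max_of_mem_Icc ha₂ hb₂ hy)
        ((h₂ b₁ hb₁).le_max_of_mem_Icc ha₂ hb₂ hy)
    _ ≤ f v.1 v.2 :=
      max_le (max_le (hvmax (a₁, a₂) (by simp)) (hvmax (a₁, b₂) (by simp)))
        (max_le (hvmax (b₁, a₂) (by simp)) (hvmax (b₁, b₂) (by simp)))

end VertexMaximum

theorem convexOn_logb_div_affine {b N c m : ℝ} {s : Set ℝ} (hb : 1 < b) (hN : N ≠ 0)
    (hs : Convex ℝ s) (hpos : ∀ x ∈ s, 0 < c + m * x) :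
    ConvexOn ℝ s fun x => Real.logb b (N / (c + m * x)) := by
  let g : ℝ →ᵃ[ℝ] ℝ := ⟨fun x => c + m * x, m • LinearMap.id, fun p v => by
    simp only [vadd_eq_add, LinearMap.smul_apply, LinearMap.id_coe, id_eq, smul_eq_mul]; ring⟩
  have hneg_log : ConvexOn ℝ s fun x => -Real.log (c + m * x) :=
    (strictConcaveOn_log_Ioi.concaveOn.neg.comp_affineMap g).subset hpos hs
  refine ((convexOn_const (Real.logb b N) hs).add
    (hneg_log.smul (inv_nonneg.2 (Real.log_pos hb).le))).congr fun x hx => ?_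
  rw [Pi.add_apply, Real.logb_div hN (hpos x hx).ne']
  simp only [Real.logb, smul_eq_mul]
  ring

theorem convexOn_fullPowerWSR_left {g11 g12 g21 g22 P1 P2 μ P12 : ℝ}
    (hg11 : 0 ≤ g11) (hg12 : 0 ≤ g12) (hg21 : 0 ≤ g21) (hg22 : 0 ≤ g22)
    (hP1 : 0 ≤ P1) (hμ : 0 ≤ μ) (hP12 : P12 ∈ Icc 0 P2) :
    ConvexOn ℝ (Icc 0 P1) fun P11 => fullPowerWSR g11 g12 g21 g22 P1 P2 μ P11 P12 := by
  obtain ⟨hP12₀, hP12₁⟩ := hP12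
  have hP2 : 0 ≤ P2 := hP12₀.trans hP12₁
  refine ((convexOn_logb_div_affine (N := 1 + g11 * P1 + g12 * P2)
      (c := 1 + g11 * P1 + g12 * (P2 - P12)) (m := -g11) one_lt_two (by positivity)
      (convex_Icc _ _) fun x hx => by nlinarith [hx.2]).add
    ((convexOn_logb_div_affine (N := 1 + g21 * P1 + g22 * P2) (c := 1 + g22 * P12) (m := g21)
      one_lt_two (by positivity) (convex_Icc _ _) fun x hx => by nlinarith [hx.1]).smul
      hμ)).congr fun x _ => ?_
  simp only [fullPowerWSR, Pi.add_apply, smul_eq_mul]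
  ring_nf

theorem convexOn_fullPowerWSR_right {g11 g12 g21 g22 P1 P2 μ P11 : ℝ}
    (hg11 : 0 ≤ g11) (hg12 : 0 ≤ g12) (hg21 : 0 ≤ g21) (hg22 : 0 ≤ g22)
    (hP2 : 0 ≤ P2) (hμ : 0 ≤ μ) (hP11 : P11 ∈ Icc 0 P1) :
    ConvexOn ℝ (Icc 0 P2) fun P12 => fullPowerWSR g11 g12 g21 g22 P1 P2 μ P11 P12 := by
  obtain ⟨hP11₀, hP11₁⟩ := hP11
  have hP1 : 0 ≤ P1 := hP11₀.trans hP11₁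
  refine ((convexOn_logb_div_affine (N := 1 + g11 * P1 + g12 * P2)
      (c := 1 + g11 * (P1 - P11) + g12 * P2) (m := -g12) one_lt_two (by positivity)
      (convex_Icc _ _) fun x hx => by nlinarith [hx.2]).add
    ((convexOn_logb_div_affine (N := 1 + g21 * P1 + g22 * P2) (c := 1 + g21 * P11) (m := g22)
      one_lt_two (by positivity) (convex_Icc _ _) fun x hx => by nlinarith [hx.1]).smul
      hμ)).congr fun x _ => ?_
  simp only [fullPowerWSR, Pi.add_apply, smul_eq_mul]
  ring_nf

theorem fullPowerWSR_convex_and_max_at_vertex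
    (g11 g12 g21 g22 P1 P2 μ : ℝ)
    (hg11 : 0 < g11) (hg12 : 0 < g12) (hg21 : 0 < g21) (hg22 : 0 < g22)
    (hP1 : 0 < P1) (hP2 : 0 < P2) (hμ : 0 ≤ μ) :
    (∀ P12 ∈ Set.Icc (0 : ℝ) P2,
      ConvexOn ℝ (Set.Icc (0 : ℝ) P1) (fun P11 => fullPowerWSR g11 g12 g21 g22 P1 P2 μ P11 P12)) ∧
    (∀ P11 ∈ Set.Icc (0 : ℝ) P1,
      ConvexOn ℝ (Set.Icc (0 : ℝ) P2) (fun P12 => fullPowerWSR g11 g12 g21 g22 P1 P2 μ P11 P12)) ∧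
    (∃ v1 v2 : ℝ,
      ((v1, v2) = ((0 : ℝ), (0 : ℝ)) ∨ (v1, v2) = (P1, (0 : ℝ)) ∨
        (v1, v2) = ((0 : ℝ), P2) ∨ (v1, v2) = (P1, P2)) ∧
      ∀ P11 ∈ Set.Icc (0 : ℝ) P1, ∀ P12 ∈ Set.Icc (0 : ℝ) P2,
        fullPowerWSR g11 g12 g21 g22 P1 P2 μ P11 P12 ≤
          fullPowerWSR g11 g12 g21 g22 P1 P2 μ v1 v2) := by
  have convex_left := fun P12 (hP12 : P12 ∈ Icc 0 P2) =>
    convexOn_fullPowerWSR_left hg11.le hg12.le hg21.le hg22.le hP1.le hμ hP12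
  have convex_right := fun P11 (hP11 : P11 ∈ Icc 0 P1) =>
    convexOn_fullPowerWSR_right hg11.le hg12.le hg21.le hg22.le hP2.le hμ hP11
  obtain ⟨⟨v1, v2⟩, hv, hmax⟩ := exists_vertex_forall_le_of_convexOn_Icc convex_left convex_right
  exact ⟨convex_left, convex_right, v1, v2,
    by simpa only [Finset.mem_insert, Finset.mem_singleton] using hv, hmax⟩
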